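/- Let ℓ ≥ 1 and m ≥ 0 be integers, and let x₀, v be real numbers with r² := x₀² + v² ≠ 0. Then Re( Σ_{j=0}^{2m} C(ℓ+j−1, ℓ−1)·C(2m+ℓ−1−j, ℓ−1)·(x₀+iv)^{2m−j}·(x₀−iv)^{j} ) = ((−1)^m·√π·Γ(m+ℓ)·r^{2m} / (Γ(ℓ)·Γ(m+1/2))) · P_m^{(−1/2, (2ℓ−1)/2)}(1 − 2x₀²/r²), where Γ is the real Gamma function and the Jacobi polynomial P_n^{(α,β)} is given by its explicit formula P_n^{(α,β)}(z) = (Γ(α+n+1)/(n!·Γ(n+α+β+1)))·Σ_{ν=0}^{n} C(n,ν)·(Γ(n+α+β+ν+1)/Γ(α+ν+1))·((z−1)/2)^ν. (Proposition 5.5 of the paper, odd case: H_ℓ^{2m+2ℓ−1}(x) expressed through Jacobi polynomials.) -/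

import Mathlib

/-! With `z = x₀ + iv` and `w = z̄`, the sum `∑ⱼ C(L+j,L) C(n+L-j,L) zⁿ⁻ʲ wʲ` is the coefficient of
`tⁿ` in `((1 - zt)(1 - wt))^-(L+1) = (1 - (z+w)t + zw t²)^-(L+1)`, i.e. the Gegenbauer polynomial
`C_n^(L+1)` written in `z + w = 2x₀` and `zw = r²`. Comparing coefficients of `zⁿ⁻ʲ wʲ` reduces this
to the alternating binomial identity `∑ₖ (-1)ᵏ C(j,k) C(M-k, j+q) = C(M-j, q)`, a `j`-th forward
difference of `x ↦ C(x, j+q)`. For `n = 2m` the Gegenbauer polynomial is a polynomial in `x₀²/r²`,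
and matching it with the explicit formula for `P_m^(-1/2, L+1/2)` only needs the half-integer values
`Γ(ν + 1/2) = (2ν - 1)‼ √π / 2^ν = (2ν)! √π / (4^ν ν!)`. -/

noncomputable def jacobiP (n : ℕ) (α β z : ℝ) : ℝ :=
  Real.Gamma (α + n + 1) / (Nat.factorial n * Real.Gamma (n + α + β + 1)) *
    ∑ ν ∈ Finset.range (n + 1),
      (Nat.choose n ν : ℝ) * (Real.Gamma (n + α + β + ν + 1) / Real.Gamma (α + ν + 1)) *
        ((z - 1) / 2) ^ ν

open Finset Real

theorem sum_neg_one_pow_mul_choose_mul_choose_sub (j q M : ℕ) (hj : j ≤ M) :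
    ∑ k ∈ range (j + 1), (-1 : ℤ) ^ k * j.choose k * (M - k).choose (j + q) =
      (M - j).choose q := by
  have h := congrFun (fwdDiff_iter_choose q j) (M - j)
  rw [fwdDiff_iter_eq_sum_shift] at h
  rw [← h, ← sum_range_reflect]
  refine sum_congr rfl fun k hk => ?_
  have hk : k ≤ j := Nat.lt_succ_iff.mp (mem_range.mp hk)
  rw [show j + 1 - 1 - k = j - k by omega, Nat.choose_symm hk, smul_eq_mul,
    show M - (j - k) = M - j + k • 1 by simp; omega]

/-- `∑ₖ (-1)ᵏ gegenbauerCoeff L n k (2x)ⁿ⁻²ᵏ` is the Gegenbauer polynomial `C_n^(L+1)(x)`. -/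
def gegenbauerCoeff (L n k : ℕ) : ℕ := (n - k).choose k * (n + L - k).choose L

theorem gegenbauerCoeff_eq_zero {L n k : ℕ} (h : n < 2 * k) : gegenbauerCoeff L n k = 0 := by
  simp [gegenbauerCoeff, Nat.choose_eq_zero_of_lt (show n - k < k by omega)]

theorem gegenbauerCoeff_mul_ite_choose (L n j k : ℕ) :
    gegenbauerCoeff L n k * (if k ≤ j then (n - 2 * k).choose (j - k) else 0) =
      (L + j).choose L * (j.choose k * (n + L - k).choose (j + L)) := by
  rcases lt_or_ge j k with hjk | hkj
  · simp [hjk.not_ge, Nat.choose_eq_zero_of_lt hjk]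
  rcases lt_or_ge (n - k) j with hnj | hjn
  · rw [Nat.choose_eq_zero_of_lt (show n + L - k < j + L by omega), mul_zero, mul_zero]
    rcases lt_or_ge (n - k) k with h | h
    · rw [gegenbauerCoeff_eq_zero (by omega), zero_mul]
    · rw [if_pos hkj, Nat.choose_eq_zero_of_lt (show n - 2 * k < j - k by omega), mul_zero]
  have h₁ : (n - k).choose j * j.choose k = (n - k).choose k * (n - k - k).choose (j - k) :=
    Nat.choose_mul hkj
  have h₂ : (n + L - k).choose (j + L) * (j + L).choose L =
      (n + L - k).choose L * (n - k).choose j := by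
    rw [Nat.choose_mul (Nat.le_add_left L j), Nat.add_sub_cancel,
      show n + L - k - L = n - k by omega]
  rw [if_pos hkj, gegenbauerCoeff, show n - 2 * k = n - k - k by omega, Nat.add_comm L j]
  calc (n - k).choose k * (n + L - k).choose L * (n - k - k).choose (j - k)
      = (n - k).choose j * j.choose k * (n + L - k).choose L := by rw [h₁]; ring
    _ = j.choose k * ((n + L - k).choose (j + L) * (j + L).choose L) := by rw [h₂]; ring
    _ = (j + L).choose L * (j.choose k * (n + L - k).choose (j + L)) := by ring

theorem sum_neg_one_pow_mul_gegenbauerCoeff_mul_ite (L n j : ℕ) (hj : j ≤ n) :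
    ∑ k ∈ range (n + 1), (-1 : ℤ) ^ k * gegenbauerCoeff L n k *
        (if k ≤ j then (n - 2 * k).choose (j - k) else 0 : ℕ) =
      (L + j).choose L * (n + L - j).choose L := by
  calc _ = ∑ k ∈ range (n + 1), ((L + j).choose L : ℤ) *
          ((-1) ^ k * j.choose k * (n + L - k).choose (j + L)) :=
        sum_congr rfl fun k _ => by
          rw [mul_assoc, ← Nat.cast_mul, gegenbauerCoeff_mul_ite_choose]; push_cast; ring
    _ = (L + j).choose L *
          ∑ k ∈ range (j + 1), (-1 : ℤ) ^ k * j.choose k * (n + L - k).choose (j + L) := by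
        rw [← mul_sum, eventually_constant_sum (N := j + 1)
          (fun k hk => by simp [Nat.choose_eq_zero_of_lt hk]) (by omega)]
    _ = _ := by rw [sum_neg_one_pow_mul_choose_mul_choose_sub j L (n + L) (by omega)]

theorem add_pow_mul_mul_pow {R : Type*} [CommSemiring R] (z w : R) {n k : ℕ} (hk : 2 * k ≤ n) :
    (z + w) ^ (n - 2 * k) * (z * w) ^ k = ∑ j ∈ range (n + 1),
      ((if k ≤ j then (n - 2 * k).choose (j - k) else 0 : ℕ) : R) * z ^ (n - j) * w ^ j := by
  rw [show n + 1 = k + (n + 1 - k) by omega, sum_range_add,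
    sum_eq_zero fun j hj => by simp [not_le.2 (mem_range.1 hj)], zero_add,
    eventually_constant_sum (N := n - 2 * k + 1) (fun i hi => by
      simp [Nat.choose_eq_zero_of_lt (show n - 2 * k < i by omega)]) (by omega),
    add_comm z w, add_pow, sum_mul]
  refine sum_congr rfl fun i hi => ?_
  have hi : i ≤ n - 2 * k := Nat.lt_succ_iff.mp (mem_range.mp hi)
  rw [if_pos (Nat.le_add_right k i), Nat.add_sub_cancel_left,
    show n - (k + i) = n - 2 * k - i + k by omega, pow_add, pow_add, mul_pow]
  ring

theorem sum_choose_mul_choose_mul_pow_mul_pow_eq_sum_gegenbauerCoeff {R : Type*} [CommRing R]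
    (L n : ℕ) (z w : R) :
    ∑ j ∈ range (n + 1),
        (((L + j).choose L * (n + L - j).choose L : ℕ) : R) * z ^ (n - j) * w ^ j =
      ∑ k ∈ range (n + 1),
        (-1) ^ k * (gegenbauerCoeff L n k : R) * ((z + w) ^ (n - 2 * k) * (z * w) ^ k) := by
  have hexpand : ∀ k ∈ range (n + 1),
      (-1) ^ k * (gegenbauerCoeff L n k : R) * ((z + w) ^ (n - 2 * k) * (z * w) ^ k) =
        ∑ j ∈ range (n + 1), (-1) ^ k * (gegenbauerCoeff L n k : R) *
          ((if k ≤ j then (n - 2 * k).choose (j - k) else 0 : ℕ) : R) * z ^ (n - j) * w ^ j := by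
    intro k _
    rcases le_or_gt (2 * k) n with hk | hk
    · rw [add_pow_mul_mul_pow z w hk, mul_sum]
      exact sum_congr rfl fun _ _ => by ring
    · simp [gegenbauerCoeff_eq_zero hk]
  rw [sum_congr rfl hexpand, sum_comm]
  refine sum_congr rfl fun j hj => ?_
  have hcoeff := congrArg (Int.cast : ℤ → R)
    (sum_neg_one_pow_mul_gegenbauerCoeff_mul_ite L n j (Nat.lt_succ_iff.mp (mem_range.mp hj)))
  push_cast at hcoeff ⊢
  rw [← sum_mul, ← sum_mul, hcoeff]

theorem re_sum_choose_mul_choose_mul_pow_conj (L n : ℕ) (x₀ v : ℝ) :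
    (∑ j ∈ range (n + 1), (((L + j).choose L * (n + L - j).choose L : ℕ) : ℂ) *
        ((x₀ : ℂ) + v * Complex.I) ^ (n - j) * ((x₀ : ℂ) - v * Complex.I) ^ j).re =
      ∑ k ∈ range (n + 1), (-1) ^ k * (gegenbauerCoeff L n k : ℝ) *
        ((2 * x₀) ^ (n - 2 * k) * (x₀ ^ 2 + v ^ 2) ^ k) := by
  have hsum : (x₀ : ℂ) + v * Complex.I + (x₀ - v * Complex.I) = (2 * x₀ : ℝ) := by
    push_cast; ring
  have hprod : ((x₀ : ℂ) + v * Complex.I) * (x₀ - v * Complex.I) = (x₀ ^ 2 + v ^ 2 : ℝ) := by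
    push_cast; ring_nf; rw [Complex.I_sq]; ring
  rw [sum_choose_mul_choose_mul_pow_mul_pow_eq_sum_gegenbauerCoeff, hsum, hprod,
    ← Complex.ofReal_re (∑ k ∈ _, _)]
  push_cast
  rfl

theorem gegenbauerCoeff_two_mul_sub (L m ν : ℕ) (hν : ν ≤ m) :
    gegenbauerCoeff L (2 * m) (m - ν) = (m + ν).choose (2 * ν) * (m + L + ν).choose L := by
  rw [gegenbauerCoeff, show 2 * m - (m - ν) = m + ν by omega,
    show 2 * m + L - (m - ν) = m + L + ν by omega,
    Nat.choose_symm_of_eq_add (show m + ν = m - ν + 2 * ν by omega)]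

theorem sum_gegenbauerCoeff_two_mul_eq_sum_choose (L m : ℕ) (a r : ℝ) (hr : r ≠ 0) :
    ∑ k ∈ range (2 * m + 1), (-1) ^ k * (gegenbauerCoeff L (2 * m) k : ℝ) *
        (a ^ (2 * m - 2 * k) * r ^ k) =
      (-1) ^ m * r ^ m * ∑ ν ∈ range (m + 1),
        ((m + ν).choose (2 * ν) * (m + L + ν).choose L : ℕ) * (-a ^ 2 / r) ^ ν := by
  rw [eventually_constant_sum (N := m + 1)
      (fun k hk => by simp [gegenbauerCoeff_eq_zero (show 2 * m < 2 * k by omega)]) (by omega),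
    ← sum_range_reflect, mul_sum]
  refine sum_congr rfl fun ν hν => ?_
  have hν : ν ≤ m := Nat.lt_succ_iff.mp (mem_range.mp hν)
  rw [Nat.add_sub_cancel, gegenbauerCoeff_two_mul_sub L m ν hν]
  obtain ⟨d, rfl⟩ := Nat.exists_eq_add_of_le hν
  rw [show 2 * (ν + d) - 2 * (ν + d - ν) = 2 * ν by omega, Nat.add_sub_cancel_left, pow_mul,
    neg_div, neg_pow (a ^ 2 / r), div_pow, pow_add, pow_add]
  have hsign : ((-1 : ℝ) ^ ν) ^ 2 = 1 := by rw [← pow_mul, pow_mul', neg_one_sq, one_pow]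
  field_simp
  rw [hsign, mul_one]

theorem Nat.factorial_two_mul_eq_mul_doubleFactorial (n : ℕ) :
    (2 * n).factorial = 2 ^ n * n.factorial * (2 * n - 1).doubleFactorial := by
  cases n with
  | zero => rfl
  | succ n =>
    have h := Nat.factorial_eq_mul_doubleFactorial (2 * n + 1)
    rw [show 2 * n + 1 + 1 = 2 * (n + 1) by ring, Nat.doubleFactorial_two_mul] at h
    rw [h, show 2 * (n + 1) - 1 = 2 * n + 1 by omega]

theorem jacobiP_neg_half_eq_sum (L m : ℕ) (z : ℝ) :
    √π * Gamma (m + (L + 1)) / (Gamma (L + 1) * Gamma (m + 1 / 2)) *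
        jacobiP m (-(1 / 2)) ((2 * ((L : ℝ) + 1) - 1) / 2) z =
      ∑ ν ∈ range (m + 1), ((m + ν).choose (2 * ν) * (m + L + ν).choose L : ℕ) *
        (2 * (z - 1)) ^ ν := by
  have hα : Gamma (-(1 / 2) + m + 1) = Gamma (m + 1 / 2) := by congr 1; ring
  have hαβ : Gamma (m + -(1 / 2) + (2 * ((L : ℝ) + 1) - 1) / 2 + 1) = (m + L).factorial := by
    rw [← Gamma_nat_eq_factorial]; congr 1; push_cast; ring
  have hmL : Gamma (m + (L + 1)) = (m + L).factorial := by
    rw [← Gamma_nat_eq_factorial]; congr 1; push_cast; ring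
  unfold jacobiP
  rw [hα, hαβ, hmL, Gamma_nat_eq_factorial, ← mul_assoc, mul_sum]
  refine sum_congr rfl fun ν hν => ?_
  have hν : ν ≤ m := Nat.lt_succ_iff.mp (mem_range.mp hν)
  have hαβν : Gamma (m + -(1 / 2) + (2 * ((L : ℝ) + 1) - 1) / 2 + ν + 1) =
      (m + L + ν).factorial := by
    rw [← Gamma_nat_eq_factorial]; congr 1; push_cast; ring
  have hαν : Gamma (-(1 / 2) + ν + 1) = Gamma (ν + 1 / 2) := by congr 1; ring
  rw [hαβν, hαν, Real.Gamma_nat_add_half ν, Nat.cast_mul, Nat.cast_choose ℝ hν,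
    Nat.cast_choose ℝ (show 2 * ν ≤ m + ν by omega),
    Nat.cast_choose ℝ (show L ≤ m + L + ν by omega),
    show m + ν - 2 * ν = m - ν by omega, show m + L + ν - L = m + ν by omega,
    Nat.factorial_two_mul_eq_mul_doubleFactorial, show 2 * (z - 1) = 2 * 2 * ((z - 1) / 2) by ring,
    mul_pow, mul_pow]
  push_cast
  field_simp

/-- **Proposition 5.5, odd case.** The polynomial `H_ℓ^{2m+2ℓ-1}(x)` (computed by substituting
`x₀ + iv` for `x` and `x₀ - iv` for `x̄` and taking the real part, with `r² = x₀² + v²`) equals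
`(-1)^m √π Γ(m+ℓ) r^{2m} / (Γ(ℓ) Γ(m+1/2)) · P_m^{(-1/2,(2ℓ-1)/2)}(1 - 2x₀²/r²)`. -/
theorem Hpoly_odd_eq_jacobi (ℓ m : ℕ) (hℓ : 1 ≤ ℓ) (x₀ v : ℝ) (h : x₀ ^ 2 + v ^ 2 ≠ 0) :
    (∑ j ∈ Finset.range (2 * m + 1),
      ((Nat.choose (ℓ - 1 + j) (ℓ - 1) * Nat.choose (2 * m + ℓ - 1 - j) (ℓ - 1) : ℕ) : ℂ) *
        ((x₀ : ℂ) + (v : ℂ) * Complex.I) ^ (2 * m - j) *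
        ((x₀ : ℂ) - (v : ℂ) * Complex.I) ^ j).re =
      (-1) ^ m * Real.sqrt Real.pi * Real.Gamma ((m : ℝ) + ℓ) * (x₀ ^ 2 + v ^ 2) ^ m /
          (Real.Gamma ℓ * Real.Gamma ((m : ℝ) + 1 / 2)) *
        jacobiP m (-(1 / 2)) ((2 * (ℓ : ℝ) - 1) / 2) (1 - 2 * x₀ ^ 2 / (x₀ ^ 2 + v ^ 2)) := by
  obtain ⟨L, rfl⟩ : ∃ L, ℓ = L + 1 := ⟨ℓ - 1, by omega⟩
  simp only [Nat.add_sub_cancel, Nat.add_succ_sub_one, Nat.cast_add, Nat.cast_one]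
  rw [re_sum_choose_mul_choose_mul_pow_conj,
    sum_gegenbauerCoeff_two_mul_eq_sum_choose L m (2 * x₀) _ h,
    show -(2 * x₀) ^ 2 / (x₀ ^ 2 + v ^ 2) = 2 * (1 - 2 * x₀ ^ 2 / (x₀ ^ 2 + v ^ 2) - 1) by ring,
    ← jacobiP_neg_half_eq_sum]
  ring
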